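/- W_δ is (1/δ)-stable compared with W: for every finite voter set R, every δ ∈ (0,1), every voting profile c ∈ {c0,c1}^R, every α ∈ (0,1], and every α-noisy probability distribution y around c, it holds E_{ỹ∼y}[W_δ(ỹ)] ≥ W(c) · (1 − α/δ). -/
import Mathlib


open Finset

/-- Number of voters voting for candidate `c0` (encoded as `true`). -/
def votesFor {R : Type*} [Fintype R] (c : R → Bool) : ℕ :=
  (univ.filter (fun r => c r = true)).card

/-- The majority threshold `⌈|R|/2⌉`. -/
noncomputable def majThreshold (R : Type*) [Fintype R] : ℕ :=
  ⌈(Fintype.card R : ℝ) / 2⌉₊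

/-- The majority-voting function `W`: value `1` iff at least `⌈|R|/2⌉` voters vote `c0`. -/
noncomputable def W {R : Type*} [Fintype R] (c : R → Bool) : ℝ :=
  if majThreshold R ≤ votesFor c then 1 else 0

/-- The relaxed majority-voting function `W_δ`: value `1` iff at least
`⌈(1-δ)·⌈|R|/2⌉⌉` voters vote `c0`. -/
noncomputable def Wrel {R : Type*} [Fintype R] (δ : ℝ) (c : R → Bool) : ℝ :=
  if ⌈(1 - δ) * (majThreshold R : ℝ)⌉₊ ≤ votesFor c then 1 else 0

/-- `W_δ` is `(1/δ)`-stable compared with `W`: for every profile `c` and every `α`-noisy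
distribution `y` around `c`, `E_{ỹ∼y}[W_δ(ỹ)] ≥ W(c)·(1 − α/δ)`. -/
theorem Wrel_stable_compared_W {R : Type*} [Fintype R] [DecidableEq R]
    (δ α : ℝ) (hδ : δ ∈ Set.Ioo (0 : ℝ) 1) (hα : α ∈ Set.Ioc (0 : ℝ) 1)
    (c : R → Bool) (y : (R → Bool) → ℝ)
    (hy0 : ∀ c', 0 ≤ y c') (hy1 : ∑ c', y c' = 1)
    (hnoisy : ∀ r : R, ∑ c' ∈ univ.filter (fun c' : R → Bool => c' r ≠ c r), y c' ≤ α) :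
    W c * (1 - α / δ) ≤ ∑ c', y c' * Wrel δ c' := by
  obtain ⟨hδ0, hδ1⟩ := hδ
  obtain ⟨hα0, hα1⟩ := hα
  have hWrel_nonneg : ∀ c' : R → Bool, 0 ≤ Wrel δ c' := by
    intro c'; unfold Wrel; split <;> norm_num
  have hRHSnonneg : 0 ≤ ∑ c', y c' * Wrel δ c' :=
    Finset.sum_nonneg fun c' _ => mul_nonneg (hy0 c') (hWrel_nonneg c')
  have hαδ : 0 ≤ α / δ := div_nonneg hα0.le hδ0.le
  by_cases hcase : 1 - α / δ ≤ 0
  · have hW0 : 0 ≤ W c := by unfold W; split <;> norm_num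
    have hWle : W c ≤ 1 := by unfold W; split <;> norm_num
    nlinarith
  push_neg at hcase
  by_cases hWc : majThreshold R ≤ votesFor c
  swap
  · have h0 : W c = 0 := by unfold W; simp [hWc]
    rw [h0, zero_mul]; exact hRHSnonneg
  have hWc1 : W c = 1 := by unfold W; simp [hWc]
  rw [hWc1, one_mul]
  set T := majThreshold R with hTdef
  by_cases hT0 : T = 0
  · have hWrel1 : ∀ c' : R → Bool, Wrel δ c' = 1 := by
      intro c'; unfold Wrel
      rw [← hTdef, hT0]
      norm_num
    have : ∑ c', y c' * Wrel δ c' = 1 := by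
      simp_rw [hWrel1, mul_one]; exact hy1
    rw [this]; linarith
  have hT1 : (0 : ℝ) < (T : ℝ) := by exact_mod_cast Nat.pos_of_ne_zero hT0
  obtain ⟨S, hSsub, hScard⟩ :=
    Finset.exists_subset_card_eq (s := univ.filter (fun r => c r = true)) (n := T) hWc
  set B := univ.filter (fun c' : R → Bool => ¬ (⌈(1 - δ) * (T : ℝ)⌉₊ ≤ votesFor c'))
    with hBdef
  -- key counting: bad profiles disagree with c on many voters of S
  have hkey : ∀ c' ∈ B, δ * T ≤ ((S.filter (fun r => c' r = false)).card : ℝ) := by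
    intro c' hc'
    have hc'B : votesFor c' < ⌈(1 - δ) * (T : ℝ)⌉₊ := by
      simp only [hBdef, mem_filter, mem_univ, true_and, not_le] at hc'
      exact hc'
    have hlt : (votesFor c' : ℝ) < (1 - δ) * T := Nat.lt_ceil.mp hc'B
    have hsplit : (S.filter (fun r => c' r = false)).card
        + (S.filter (fun r => ¬ (c' r = false))).card = S.card :=
      Finset.card_filter_add_card_filter_not _
    rw [hScard] at hsplit
    have hsub2 : S.filter (fun r => ¬ (c' r = false)) ⊆ univ.filter (fun r => c' r = true) := by
      intro r hr
      simp only [mem_filter, mem_univ, true_and, Bool.not_eq_false] at hr ⊢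
      exact hr.2
    have hle2 : ((S.filter (fun r => ¬ (c' r = false))).card : ℝ) ≤ votesFor c' := by
      exact_mod_cast Finset.card_le_card hsub2
    have hreal : ((S.filter (fun r => c' r = false)).card : ℝ)
        + ((S.filter (fun r => ¬ (c' r = false))).card : ℝ) = T := by
      exact_mod_cast hsplit
    nlinarith
  -- mass of bad profiles is small
  have hBmass : (∑ c' ∈ B, y c') * (δ * T) ≤ α * T := by
    have h1 : (∑ c' ∈ B, y c') * (δ * T)
        ≤ ∑ c' ∈ B, y c' * ((S.filter (fun r => c' r = false)).card : ℝ) := by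
      rw [Finset.sum_mul]
      exact Finset.sum_le_sum fun c' hc' =>
        mul_le_mul_of_nonneg_left (hkey c' hc') (hy0 c')
    have h2 : ∑ c' ∈ B, y c' * ((S.filter (fun r => c' r = false)).card : ℝ)
        = ∑ r ∈ S, ∑ c' ∈ B, (if c' r = false then y c' else 0) := by
      rw [Finset.sum_comm]
      refine Finset.sum_congr rfl fun c' _ => ?_
      rw [← Finset.sum_filter, Finset.sum_const, nsmul_eq_mul, mul_comm]
    have h3 : ∀ r ∈ S, ∑ c' ∈ B, (if c' r = false then y c' else 0) ≤ α := by
      intro r hr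
      have hcr : c r = true := by
        have := hSsub hr
        simpa using this
      rw [← Finset.sum_filter]
      refine le_trans (Finset.sum_le_sum_of_subset_of_nonneg ?_
        (fun c' _ _ => hy0 c')) (hnoisy r)
      intro c' hc'
      simp only [mem_filter, mem_univ, true_and] at hc' ⊢
      rw [hc'.2, hcr]
      simp
    calc (∑ c' ∈ B, y c') * (δ * T)
        ≤ ∑ r ∈ S, ∑ c' ∈ B, (if c' r = false then y c' else 0) := by rw [← h2]; exact h1
      _ ≤ ∑ r ∈ S, α := Finset.sum_le_sum h3
      _ = α * T := by rw [Finset.sum_const, hScard, nsmul_eq_mul, mul_comm]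
  have hBy : ∑ c' ∈ B, y c' ≤ α / δ := by
    rw [le_div_iff₀ hδ0]
    nlinarith
  -- conclude
  have hgood : ∀ c' ∈ univ \ B, Wrel δ c' = 1 := by
    intro c' hc'
    simp only [hBdef, mem_sdiff, mem_univ, mem_filter, true_and, not_not] at hc'
    unfold Wrel
    rw [← hTdef]
    exact if_pos hc'
  calc 1 - α / δ ≤ 1 - ∑ c' ∈ B, y c' := by linarith
    _ = ∑ c' ∈ univ \ B, y c' := by
        rw [Finset.sum_sdiff_eq_sub (Finset.subset_univ B), hy1]
    _ = ∑ c' ∈ univ \ B, y c' * Wrel δ c' := by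
        refine Finset.sum_congr rfl fun c' hc' => ?_
        rw [hgood c' hc', mul_one]
    _ ≤ ∑ c', y c' * Wrel δ c' :=
        Finset.sum_le_sum_of_subset_of_nonneg (Finset.sdiff_subset)
          (fun c' _ _ => mul_nonneg (hy0 c') (hWrel_nonneg c'))
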